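/- For k ∈ (0,1), with K, E the complete elliptic integrals and Θ(k) = ∫₀^{π/2} cos²θ/√(1-k²sin²θ) dθ, the mass m(k) = (8/π) k² K(k) Θ(k) satisfies (π/8) m'(k) = (E(k) + (k²-1)K(k))²/(k(1-k²)) + k K(k)²; in particular m'(k) > 0, so m is strictly increasing on (0,1). -/

import Mathlib

/-!
Write `Δ = 1 - k² sin² θ` and `J(k) = ∫₀^{π/2} Δ^{-3/2} dθ`. Differentiating under the integral
sign and using `k² sin² θ = 1 - Δ` gives `k K' = J - K` and `k E' = E - K`, while integrating the
`θ`-derivative of `-k² sin θ cos θ / √Δ` over `[0, π/2]` gives `(1 - k²) J = E`. Hence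
`K' = (E + (k² - 1) K) / (k (1 - k²))` and `(E + (k² - 1) K)' = k K`. Since
`k² cos² θ = Δ - (1 - k²)`, also `k² Θ = E + (k² - 1) K`, so `m = (8/π) K (E + (k² - 1) K)` and the
product rule gives the formula: a nonnegative plus a positive term.
-/

open Real Set Metric Function Filter Topology intervalIntegral
open scoped Interval

theorem hasDerivAt_intervalIntegral_of_continuousOn {E : Type*} [NormedAddCommGroup E]
    [NormedSpace ℝ E] {F F' : ℝ → ℝ → E} {U : Set ℝ} {x₀ a b : ℝ} (hU : IsOpen U)
    (hx₀ : x₀ ∈ U) (hF : ∀ x ∈ U, ContinuousOn (F x) [[a, b]])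
    (hF' : ContinuousOn (uncurry F') (U ×ˢ [[a, b]]))
    (hderiv : ∀ x ∈ U, ∀ t ∈ [[a, b]], HasDerivAt (F · t) (F' x t) x) :
    HasDerivAt (fun x => ∫ t in a..b, F x t) (∫ t in a..b, F' x₀ t) x₀ := by
  obtain ⟨r, hr, hrU⟩ := nhds_basis_closedBall.mem_iff.1 (hU.mem_nhds hx₀)
  obtain ⟨C, hC⟩ := ((isCompact_closedBall x₀ r).prod isCompact_uIcc).exists_bound_of_continuousOn
      (hF'.mono (prod_mono hrU subset_rfl))
  have hF'x₀ : ContinuousOn (F' x₀) [[a, b]] :=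
    hF'.comp (continuousOn_const.prodMk continuousOn_id) fun t ht => ⟨hx₀, ht⟩
  refine (hasDerivAt_integral_of_dominated_loc_of_deriv_le (bound := fun _ => C)
    (closedBall_mem_nhds x₀ hr) (eventually_of_mem (hU.mem_nhds hx₀) fun x hx => ?_)
    (hF x₀ hx₀).intervalIntegrable ?_ ?_ intervalIntegrable_const ?_).2
  · exact ((hF x hx).mono uIoc_subset_uIcc).aestronglyMeasurable measurableSet_uIoc
  · exact (hF'x₀.mono uIoc_subset_uIcc).aestronglyMeasurable measurableSet_uIoc
  · exact .of_forall fun t ht x hx => hC (x, t) ⟨hx, uIoc_subset_uIcc ht⟩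
  · exact .of_forall fun t ht x hx => hderiv x (hrU hx) t (uIoc_subset_uIcc ht)

namespace CompleteElliptic

noncomputable section

def delta (k θ : ℝ) : ℝ := 1 - k ^ 2 * sin θ ^ 2

def ellipticK (k : ℝ) : ℝ := ∫ θ in 0..π / 2, 1 / √(delta k θ)

def ellipticE (k : ℝ) : ℝ := ∫ θ in 0..π / 2, √(delta k θ)

def ellipticTheta (k : ℝ) : ℝ := ∫ θ in 0..π / 2, cos θ ^ 2 / √(delta k θ)

def ellipticJ (k : ℝ) : ℝ := ∫ θ in 0..π / 2, 1 / √(delta k θ) ^ 3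

end

variable {k : ℝ}

theorem one_sub_sq_pos (hk : |k| < 1) : 0 < 1 - k ^ 2 :=
  sub_pos.2 ((sq_lt_one_iff_abs_lt_one k).2 hk)

theorem delta_pos (hk : |k| < 1) (θ : ℝ) : 0 < delta k θ := by
  unfold delta
  nlinarith [one_sub_sq_pos hk, sin_sq_le_one θ, sq_nonneg k]

theorem sqrt_delta_pos (hk : |k| < 1) (θ : ℝ) : 0 < √(delta k θ) :=
  sqrt_pos.2 (delta_pos hk θ)

theorem sq_sqrt_delta (hk : |k| < 1) (θ : ℝ) : √(delta k θ) ^ 2 = 1 - k ^ 2 * sin θ ^ 2 :=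
  sq_sqrt (delta_pos hk θ).le

@[fun_prop]
theorem continuous_delta : Continuous (uncurry delta) := by unfold delta; fun_prop

theorem hasDerivAt_delta (k θ : ℝ) : HasDerivAt (delta · θ) (-(2 * k * sin θ ^ 2)) k := by
  unfold delta
  simpa using ((hasDerivAt_pow 2 k).mul_const (sin θ ^ 2)).const_sub 1

theorem hasDerivAt_sqrt_delta (hk : |k| < 1) (θ : ℝ) :
    HasDerivAt (fun x => √(delta x θ)) (-(k * sin θ ^ 2) / √(delta k θ)) k :=
  ((hasDerivAt_delta k θ).sqrt (delta_pos hk θ).ne').congr_deriv (by field_simp)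

theorem hasDerivAt_one_div_sqrt_delta (hk : |k| < 1) (θ : ℝ) :
    HasDerivAt (fun x => 1 / √(delta x θ)) (k * sin θ ^ 2 / √(delta k θ) ^ 3) k := by
  simp only [one_div]
  refine ((hasDerivAt_sqrt_delta hk θ).inv (sqrt_delta_pos hk θ).ne').congr_deriv ?_
  field_simp

theorem hasDerivAt_neg_sq_mul_sin_mul_cos_div_sqrt_delta (hk : |k| < 1) (θ : ℝ) :
    HasDerivAt (fun θ => -(k ^ 2 * sin θ * cos θ) / √(delta k θ))
      ((1 - k ^ 2) * (1 / √(delta k θ) ^ 3) - √(delta k θ)) θ := by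
  have hdelta : HasDerivAt (delta k) (-(2 * k ^ 2 * sin θ * cos θ)) θ := by
    unfold delta
    simpa [mul_assoc, mul_left_comm] using
      ((hasDerivAt_sin θ).pow 2).const_mul (k ^ 2) |>.const_sub 1
  have h := (((hasDerivAt_sin θ).const_mul (k ^ 2)).mul (hasDerivAt_cos θ)).neg.div
    (hdelta.sqrt (delta_pos hk θ).ne') (sqrt_delta_pos hk θ).ne'
  refine h.congr_deriv ?_
  have hs := (sqrt_delta_pos hk θ).ne'
  have hsq := sq_sqrt_delta hk θ
  have hpyth := sin_sq_add_cos_sq θ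
  simp only [Pi.neg_apply, Pi.mul_apply]
  field_simp
  linear_combination
    (√(delta k θ) ^ 2 + 1 - k ^ 2 * sin θ ^ 2 + k ^ 2 * (sin θ ^ 2 - cos θ ^ 2)) * hsq -
      k ^ 2 * hpyth

theorem continuous_sqrt_delta (k : ℝ) : Continuous fun θ => √(delta k θ) := by
  unfold delta; fun_prop

theorem continuous_one_div_sqrt_delta (hk : |k| < 1) :
    Continuous fun θ => 1 / √(delta k θ) := by
  fun_prop (disch := exact fun θ => (sqrt_delta_pos hk θ).ne')

theorem continuous_one_div_sqrt_delta_pow_three (hk : |k| < 1) :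
    Continuous fun θ => 1 / √(delta k θ) ^ 3 := by
  fun_prop (disch := exact fun θ => (pow_pos (sqrt_delta_pos hk θ) 3).ne')

theorem hasDerivAt_ellipticK_integral (hk : |k| < 1) :
    HasDerivAt ellipticK (∫ θ in 0..π / 2, k * sin θ ^ 2 / √(delta k θ) ^ 3) k := by
  refine hasDerivAt_intervalIntegral_of_continuousOn (U := ball 0 1) isOpen_ball
    (by simpa using hk)
    (fun x hx => (continuous_one_div_sqrt_delta (by simpa using hx)).continuousOn) ?_
    fun x hx θ _ => hasDerivAt_one_div_sqrt_delta (by simpa using hx) θ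
  exact .div (by fun_prop) (by fun_prop) fun p hp =>
    (pow_pos (sqrt_delta_pos (by simpa using hp.1) p.2) 3).ne'

theorem hasDerivAt_ellipticE_integral (hk : |k| < 1) :
    HasDerivAt ellipticE (∫ θ in 0..π / 2, -(k * sin θ ^ 2) / √(delta k θ)) k := by
  refine hasDerivAt_intervalIntegral_of_continuousOn (U := ball 0 1) isOpen_ball
    (by simpa using hk) (fun x _ => (continuous_sqrt_delta x).continuousOn) ?_
    fun x hx θ _ => hasDerivAt_sqrt_delta (by simpa using hx) θ
  exact .div (by fun_prop) (by fun_prop) fun p hp =>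
    (sqrt_delta_pos (by simpa using hp.1) p.2).ne'

theorem hasDerivAt_ellipticE (hk₀ : k ≠ 0) (hk : |k| < 1) :
    HasDerivAt ellipticE ((ellipticE k - ellipticK k) / k) k := by
  convert hasDerivAt_ellipticE_integral hk using 1
  rw [div_eq_iff hk₀, ellipticE, ellipticK, ← integral_sub
    ((continuous_sqrt_delta k).intervalIntegrable _ _)
    ((continuous_one_div_sqrt_delta hk).intervalIntegrable _ _),
    ← integral_mul_const]
  refine integral_congr fun θ _ => ?_
  have hs := (sqrt_delta_pos hk θ).ne'
  have hsq := sq_sqrt_delta hk θ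
  field_simp
  linear_combination hsq

theorem one_sub_sq_mul_ellipticJ (hk : |k| < 1) : (1 - k ^ 2) * ellipticJ k = ellipticE k := by
  rw [ellipticJ, ellipticE, ← integral_const_mul, ← sub_eq_zero, ← integral_sub
    (((continuous_one_div_sqrt_delta_pow_three hk).const_mul _).intervalIntegrable _ _)
    ((continuous_sqrt_delta k).intervalIntegrable _ _)]
  rw [integral_eq_sub_of_hasDerivAt
    (fun θ _ => hasDerivAt_neg_sq_mul_sin_mul_cos_div_sqrt_delta hk θ)
    ((((continuous_one_div_sqrt_delta_pow_three hk).const_mul _).sub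
      (continuous_sqrt_delta k)).intervalIntegrable _ _)]
  simp

theorem hasDerivAt_ellipticK (hk₀ : k ≠ 0) (hk : |k| < 1) :
    HasDerivAt ellipticK ((ellipticE k + (k ^ 2 - 1) * ellipticK k) / (k * (1 - k ^ 2))) k := by
  have h1k := (one_sub_sq_pos hk).ne'
  convert hasDerivAt_ellipticK_integral hk using 1
  rw [← one_sub_sq_mul_ellipticJ hk, div_eq_iff (mul_ne_zero hk₀ h1k)]
  suffices ellipticJ k - ellipticK k = (∫ θ in 0..π / 2, k * sin θ ^ 2 / √(delta k θ) ^ 3) * k by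
    linear_combination (1 - k ^ 2) * this
  rw [ellipticJ, ellipticK, ← integral_sub
    ((continuous_one_div_sqrt_delta_pow_three hk).intervalIntegrable _ _)
    ((continuous_one_div_sqrt_delta hk).intervalIntegrable _ _), ← integral_mul_const]
  refine integral_congr fun θ _ => ?_
  have hs := (sqrt_delta_pos hk θ).ne'
  have hsq := sq_sqrt_delta hk θ
  field_simp
  linear_combination -hsq

theorem sq_mul_ellipticTheta (hk : |k| < 1) :
    k ^ 2 * ellipticTheta k = ellipticE k + (k ^ 2 - 1) * ellipticK k := by
  rw [ellipticTheta, ellipticE, ellipticK, ← integral_const_mul, ← integral_const_mul,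
    ← integral_add ((continuous_sqrt_delta k).intervalIntegrable _ _)
      (((continuous_one_div_sqrt_delta hk).const_mul _).intervalIntegrable _ _)]
  refine integral_congr fun θ _ => ?_
  have hs := (sqrt_delta_pos hk θ).ne'
  have hsq := sq_sqrt_delta hk θ
  have hpyth := sin_sq_add_cos_sq θ
  field_simp
  linear_combination -hsq + k ^ 2 * hpyth

theorem ellipticK_pos (hk : |k| < 1) : 0 < ellipticK k :=
  intervalIntegral_pos_of_pos ((continuous_one_div_sqrt_delta hk).intervalIntegrable _ _)
    (fun θ => one_div_pos.2 (sqrt_delta_pos hk θ)) (by positivity)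

theorem hasDerivAt_ellipticE_add_mul_ellipticK (hk₀ : k ≠ 0) (hk : |k| < 1) :
    HasDerivAt (fun x => ellipticE x + (x ^ 2 - 1) * ellipticK x) (k * ellipticK k) k := by
  have h1k := (one_sub_sq_pos hk).ne'
  refine ((hasDerivAt_ellipticE hk₀ hk).add (((hasDerivAt_pow 2 k).sub_const 1).mul
    (hasDerivAt_ellipticK hk₀ hk))).congr_deriv ?_
  field_simp
  ring

theorem hasDerivAt_mass (hk₀ : k ≠ 0) (hk : |k| < 1) :
    HasDerivAt (fun x => 8 / π * x ^ 2 * ellipticK x * ellipticTheta x)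
      (8 / π * ((ellipticE k + (k ^ 2 - 1) * ellipticK k) ^ 2 / (k * (1 - k ^ 2)) +
        k * ellipticK k ^ 2)) k := by
  have heq : (fun x => 8 / π * (ellipticK x * (ellipticE x + (x ^ 2 - 1) * ellipticK x)))
      =ᶠ[𝓝 k] fun x => 8 / π * x ^ 2 * ellipticK x * ellipticTheta x := by
    filter_upwards [(isOpen_lt continuous_abs continuous_const).mem_nhds hk] with x hx
    rw [← sq_mul_ellipticTheta hx]
    ring
  have hprod := (hasDerivAt_ellipticK hk₀ hk).mul (hasDerivAt_ellipticE_add_mul_ellipticK hk₀ hk)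
  refine ((hprod.const_mul (8 / π)).congr_of_eventuallyEq heq.symm).congr_deriv ?_
  ring

theorem mass_deriv_pos (hk₀ : 0 < k) (hk : |k| < 1) :
    0 < 8 / π * ((ellipticE k + (k ^ 2 - 1) * ellipticK k) ^ 2 / (k * (1 - k ^ 2)) +
      k * ellipticK k ^ 2) :=
  mul_pos (by positivity) (add_pos_of_nonneg_of_pos
    (div_nonneg (sq_nonneg _) (mul_pos hk₀ (one_sub_sq_pos hk)).le)
    (mul_pos hk₀ (pow_pos (ellipticK_pos hk) 2)))

end CompleteElliptic

open CompleteElliptic in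
/-- Derivative of the mass function `m(k) = (8/π) k² K(k) Θ(k)`:
`(π/8) m'(k) = (E + (k²-1)K)²/(k(1-k²)) + k K²`; in particular `m' > 0` and `m`
is strictly increasing on `(0,1)`. -/
theorem mass_derivative_formula
    (K E Θ m : ℝ → ℝ)
    (hK : ∀ k, K k = ∫ θ in (0:ℝ)..(Real.pi / 2),
      1 / Real.sqrt (1 - k ^ 2 * Real.sin θ ^ 2))
    (hE : ∀ k, E k = ∫ θ in (0:ℝ)..(Real.pi / 2),
      Real.sqrt (1 - k ^ 2 * Real.sin θ ^ 2))
    (hΘ : ∀ k, Θ k = ∫ θ in (0:ℝ)..(Real.pi / 2),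
      Real.cos θ ^ 2 / Real.sqrt (1 - k ^ 2 * Real.sin θ ^ 2))
    (hm : ∀ k, m k = (8 / Real.pi) * k ^ 2 * K k * Θ k) :
    (∀ k ∈ Set.Ioo (0:ℝ) 1,
      HasDerivAt m ((8 / Real.pi) *
        ((E k + (k ^ 2 - 1) * K k) ^ 2 / (k * (1 - k ^ 2)) + k * (K k) ^ 2)) k ∧
      0 < (8 / Real.pi) *
        ((E k + (k ^ 2 - 1) * K k) ^ 2 / (k * (1 - k ^ 2)) + k * (K k) ^ 2)) ∧
    StrictMonoOn m (Set.Ioo 0 1) := by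
  obtain rfl : K = ellipticK := funext hK
  obtain rfl : E = ellipticE := funext hE
  obtain rfl : Θ = ellipticTheta := funext hΘ
  obtain rfl : m = fun k => 8 / π * k ^ 2 * ellipticK k * ellipticTheta k := funext hm
  have hderiv := fun k (hk : k ∈ Ioo (0:ℝ) 1) =>
    have habs : |k| < 1 := by rw [abs_of_pos hk.1]; exact hk.2
    And.intro (hasDerivAt_mass hk.1.ne' habs) (mass_deriv_pos hk.1 habs)
  refine ⟨hderiv, strictMonoOn_of_deriv_pos (convex_Ioo 0 1)
    (fun k hk => (hderiv k hk).1.continuousAt.continuousWithinAt) fun k hk => ?_⟩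
  rw [interior_Ioo] at hk
  exact (hderiv k hk).1.deriv ▸ (hderiv k hk).2
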